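/- Assume model (1.1) with p ≥ 3, where in addition E(Z_{jl} Z_{cm}) = U_{jc} V_{lm} for all 1 ≤ j,c ≤ K₁ and 1 ≤ l,m ≤ K₂ (as holds when Z ~ MN(0,U,V)), with V positive semidefinite. Then: (i) for any w ≠ x with w ∈ G_i^{(r)} and x ∈ G_h^{(r)}, if every row cluster contains some index different from w and x, then COD_{Σ_{p,W_O}}(w,x) = (tr(V)/K₂) · max_{1≤l≤K₁} |U_{il} − U_{hl}|; (ii) if moreover every row cluster contains at least two indices and K₁ ≥ 2, then MCOD(Σ_{p,W_O}) = (tr(V)/K₂) · min_{1≤i≠h≤K₁} max_{1≤l≤K₁} |U_{il} − U_{hl}|. -/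

import Mathlib

/-!
With membership labels `g` and `f`, model (1.1) reads `X_{as} = Z_{g(a) f(s)} + Γ_{as}`. For rows
`a ≠ c` the noise does not contribute to `E(X_{as} X_{ct})` (independence and zero means), so
`Σ_{ac} = U_{g(a) g(c)} · ∑_{s,t} (W_O)_{st} V_{f(s) f(t)} = U_{g(a) g(c)} · tr((Bᵀ W_O B)ᵀ V)`,
and `Bᵀ W_O B = I / K₂` because `BᵀB` is invertible. Hence for `c ≠ w, x` the differences
`Σ_{wc} − Σ_{xc}` are `tr(V)/K₂ · (U_{g(w) g(c)} − U_{g(x) g(c)})`, and as `c` runs through a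
representative of every cluster their maximum is the claimed one. The MCOD formula follows by
reindexing pairs of rows in different clusters by pairs of distinct clusters.
-/

open MeasureTheory ProbabilityTheory Matrix BigOperators Finset
open scoped Classical

noncomputable section

instance {m n : Type*} : MeasurableSpace (Matrix m n ℝ) :=
  inferInstanceAs (MeasurableSpace (m → n → ℝ))

/-- Entrywise expectation of a random matrix. -/
def matExp {Ω : Type*} [MeasurableSpace Ω] (μ : Measure Ω) {m n : ℕ}
    (X : Ω → Matrix (Fin m) (Fin n) ℝ) : Matrix (Fin m) (Fin n) ℝ :=
  Matrix.of fun i j => ∫ ω, X ω i j ∂μ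

/-- A membership matrix: binary, every row has exactly one 1, every column is nonzero. -/
def IsMembership {p K : ℕ} (A : Matrix (Fin p) (Fin K) ℝ) : Prop :=
  (∀ i k, A i k = 0 ∨ A i k = 1) ∧ (∀ i, ∃! k, A i k = 1) ∧ (∀ k, ∃ i, A i k = 1)

/-- `a` and `b` belong to the same cluster encoded by the membership matrix `A`. -/
def SameCluster {p K : ℕ} (A : Matrix (Fin p) (Fin K) ℝ) (a b : Fin p) : Prop :=
  ∃ k, A a k = 1 ∧ A b k = 1

/-- `COD_Σ(a,b) = max_{c ≠ a,b} |Σ_{ac} − Σ_{bc}|`. -/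
def COD {p : ℕ} (S : Matrix (Fin p) (Fin p) ℝ) (a b : Fin p) : ℝ :=
  ⨆ c : Fin p, ⨆ _ : c ≠ a ∧ c ≠ b, |S a c - S b c|

/-- `MCOD(Σ) = min_{a ≁ b} COD_Σ(a,b)`, the minimum over pairs in different clusters. -/
def MCOD {p : ℕ} (r : Fin p → Fin p → Prop) (S : Matrix (Fin p) (Fin p) ℝ) : ℝ :=
  ⨅ ab : {ab : Fin p × Fin p // ¬ r ab.1 ab.2}, COD S ab.1.1 ab.1.2

/-- Entrywise maximum norm `‖M‖_max = max_{i,j} |M_{ij}|`. -/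
def maxNorm {p q : ℕ} (M : Matrix (Fin p) (Fin q) ℝ) : ℝ := ⨆ i, ⨆ j, |M i j|

/-- Frobenius norm. -/
def frob {m n : ℕ} (M : Matrix (Fin m) (Fin n) ℝ) : ℝ := Real.sqrt (∑ i, ∑ j, (M i j)^2)

lemma IsMembership.exists_eq_one_submatrix {p K : ℕ} {A : Matrix (Fin p) (Fin K) ℝ}
    (hA : IsMembership A) :
    ∃ g : Fin p → Fin K, Function.Surjective g ∧
      A = (1 : Matrix (Fin K) (Fin K) ℝ).submatrix g id := by
  choose g hg hg_unique using hA.2.1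
  refine ⟨g, fun k => ?_, ?_⟩
  · obtain ⟨a, ha⟩ := hA.2.2 k
    exact ⟨a, (hg_unique a k ha).symm⟩
  · ext a k
    rcases hA.1 a k with h | h
    · have : g a ≠ k := fun hk => by simp [← hk, hg] at h
      simp [h, one_apply, this]
    · simp [one_apply, hg_unique a k h, hg]

section OneSubmatrix

variable {ι κ R : Type*} [DecidableEq κ]

lemma one_submatrix_apply_eq_one_iff [MulZeroOneClass R] [NeZero (1 : R)] (g : ι → κ) (a : ι)
    (k : κ) :
    (1 : Matrix κ κ R).submatrix g id a k = 1 ↔ g a = k := by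
  simp [one_apply]

lemma sameCluster_one_submatrix_iff {p K : ℕ} (g : Fin p → Fin K) (a b : Fin p) :
    SameCluster ((1 : Matrix (Fin K) (Fin K) ℝ).submatrix g id) a b ↔ g a = g b := by
  simp [SameCluster, one_apply, eq_comm]

lemma one_submatrix_mul_mul_transpose [Fintype κ] [NonAssocSemiring R] {ι' κ' : Type*}
    [Fintype κ'] [DecidableEq κ'] (g : ι → κ) (f : ι' → κ') (M : Matrix κ κ' R) :
    (1 : Matrix κ κ R).submatrix g id * M * ((1 : Matrix κ' κ' R).submatrix f id)ᵀ
      = M.submatrix g f := by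
  ext a s
  simp [mul_apply, one_apply]

lemma transpose_one_submatrix_mul_self [Fintype ι] [NonAssocSemiring R] (f : ι → κ) :
    ((1 : Matrix κ κ R).submatrix f id)ᵀ * (1 : Matrix κ κ R).submatrix f id
      = diagonal fun k => (#{s | f s = k} : R) := by
  ext k l
  by_cases hkl : k = l
  · subst hkl
    simp only [mul_apply, transpose_apply, submatrix_apply, id, one_apply, diagonal_apply_eq,
      mul_boole, ← ite_and, and_self, Finset.sum_boole]
  · simp only [mul_apply, transpose_apply, submatrix_apply, id, one_apply,
      diagonal_apply_ne _ hkl, mul_boole]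
    exact Finset.sum_eq_zero fun s _ => by grind

lemma isUnit_det_transpose_one_submatrix_mul_self [Fintype ι] [Field R] [CharZero R] {f : ι → κ}
    [Fintype κ] (hf : Function.Surjective f) :
    IsUnit (((1 : Matrix κ κ R).submatrix f id)ᵀ * (1 : Matrix κ κ R).submatrix f id).det := by
  rw [transpose_one_submatrix_mul_self, det_diagonal, isUnit_iff_ne_zero, Finset.prod_ne_zero_iff]
  intro k _
  obtain ⟨s, rfl⟩ := hf k
  exact Nat.cast_ne_zero.mpr (Finset.card_ne_zero.mpr ⟨s, by simp⟩)

end OneSubmatrix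

lemma mul_inv_sq_mul_self_of_isUnit_det {n R : Type*} [Fintype n] [DecidableEq n] [CommRing R]
    {D : Matrix n n R} (hD : IsUnit D.det) : D * (D ^ 2)⁻¹ * D = 1 := by
  rw [pow_two, Matrix.mul_inv_rev, ← Matrix.mul_assoc, mul_nonsing_inv _ hD, Matrix.one_mul,
    nonsing_inv_mul _ hD]

def weightO {q K : ℕ} (B : Matrix (Fin q) (Fin K) ℝ) : Matrix (Fin q) (Fin q) ℝ :=
  (1 / (K : ℝ)) • (B * ((Bᵀ * B) ^ 2)⁻¹ * Bᵀ)

lemma transpose_mul_weightO_mul {q K : ℕ} {B : Matrix (Fin q) (Fin K) ℝ}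
    (hB : IsUnit (Bᵀ * B).det) :
    Bᵀ * weightO B * B = (1 / (K : ℝ)) • 1 := by
  rw [weightO, Matrix.mul_smul, Matrix.smul_mul, ← mul_inv_sq_mul_self_of_isUnit_det hB]
  simp only [Matrix.mul_assoc]

lemma sum_weightO_mul_submatrix_apply {q K : ℕ} {f : Fin q → Fin K} (hf : Function.Surjective f)
    (V : Matrix (Fin K) (Fin K) ℝ) :
    ∑ s, ∑ t, weightO ((1 : Matrix (Fin K) (Fin K) ℝ).submatrix f id) s t * V (f s) (f t)
      = V.trace / K := by
  set B := (1 : Matrix (Fin K) (Fin K) ℝ).submatrix f id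
  calc ∑ s, ∑ t, weightO B s t * V (f s) (f t) = (weightO B * (B * Vᵀ * Bᵀ)).trace := by
        simp only [B, one_submatrix_mul_mul_transpose]
        simp [trace, mul_apply]
    _ = ((Bᵀ * weightO B * B) * Vᵀ).trace := by
        rw [show weightO B * (B * Vᵀ * Bᵀ) = (weightO B * B * Vᵀ) * Bᵀ by
          simp only [Matrix.mul_assoc], trace_mul_comm]
        simp only [Matrix.mul_assoc]
    _ = V.trace / K := by
        rw [transpose_mul_weightO_mul (isUnit_det_transpose_one_submatrix_mul_self hf),
          Matrix.smul_mul, Matrix.one_mul, trace_smul, trace_transpose, smul_eq_mul,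
          one_div, inv_mul_eq_div]

section Moments

variable {Ω : Type*} [MeasurableSpace Ω] {μ : Measure Ω}

lemma measurable_matrix_apply {m n : Type*} (i : m) (j : n) :
    Measurable fun M : Matrix m n ℝ => M i j :=
  (measurable_pi_apply j).comp (measurable_pi_apply i)

lemma ProbabilityTheory.IndepFun.integral_mul_eq_zero {f g : Ω → ℝ} (hfg : IndepFun f g μ)
    (hf : Measurable f) (hg : Measurable g) (hg_zero : ∫ ω, g ω ∂μ = 0) :
    ∫ ω, f ω * g ω ∂μ = 0 := by
  rw [hfg.integral_fun_mul_eq_mul_integral hf.aestronglyMeasurable hg.aestronglyMeasurable,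
    hg_zero, mul_zero]

lemma MeasureTheory.Integrable.add_mul_add {f₁ g₁ f₂ g₂ : Ω → ℝ}
    (hff : Integrable (fun ω => f₁ ω * f₂ ω) μ) (hfg : Integrable (fun ω => f₁ ω * g₂ ω) μ)
    (hgf : Integrable (fun ω => g₁ ω * f₂ ω) μ) (hgg : Integrable (fun ω => g₁ ω * g₂ ω) μ) :
    Integrable (fun ω => (f₁ ω + g₁ ω) * (f₂ ω + g₂ ω)) μ := by
  simp_rw [add_mul, mul_add]
  exact (hff.add hfg).add (hgf.add hgg)

lemma integral_add_mul_add_of_integral_cross_eq_zero {f₁ g₁ f₂ g₂ : Ω → ℝ}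
    (hff : Integrable (fun ω => f₁ ω * f₂ ω) μ) (hfg : Integrable (fun ω => f₁ ω * g₂ ω) μ)
    (hgf : Integrable (fun ω => g₁ ω * f₂ ω) μ) (hgg : Integrable (fun ω => g₁ ω * g₂ ω) μ)
    (hfg_zero : ∫ ω, f₁ ω * g₂ ω ∂μ = 0) (hgf_zero : ∫ ω, g₁ ω * f₂ ω ∂μ = 0)
    (hgg_zero : ∫ ω, g₁ ω * g₂ ω ∂μ = 0) :
    ∫ ω, (f₁ ω + g₁ ω) * (f₂ ω + g₂ ω) ∂μ = ∫ ω, f₁ ω * f₂ ω ∂μ := by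
  have hf : Integrable (fun ω => f₁ ω * f₂ ω + f₁ ω * g₂ ω) μ := hff.add hfg
  have hg : Integrable (fun ω => g₁ ω * f₂ ω + g₁ ω * g₂ ω) μ := hgf.add hgg
  simp_rw [add_mul, mul_add]
  rw [integral_add hf hg, integral_add hff hfg, integral_add hgf hgg,
    hfg_zero, hgf_zero, hgg_zero, add_zero, add_zero, add_zero]

lemma matExp_mul_mul_transpose_apply {p q : ℕ} {X : Ω → Matrix (Fin p) (Fin q) ℝ}
    (hX : ∀ a s b t, Integrable (fun ω => X ω a s * X ω b t) μ) (W : Matrix (Fin q) (Fin q) ℝ)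
    (a b : Fin p) :
    matExp μ (fun ω => X ω * W * (X ω)ᵀ) a b = ∑ s, ∑ t, W s t * ∫ ω, X ω a s * X ω b t ∂μ := by
  have hexpand : ∀ ω, (X ω * W * (X ω)ᵀ) a b = ∑ s, ∑ t, W s t * (X ω a s * X ω b t) := by
    intro ω
    simp only [mul_apply, transpose_apply, Finset.sum_mul]
    rw [Finset.sum_comm]
    exact Finset.sum_congr rfl fun s _ => Finset.sum_congr rfl fun t _ => by ring
  simp only [matExp, of_apply, hexpand]
  refine (integral_finsetSum _ fun s _ =>
    integrable_finsetSum _ fun t _ => (hX a s b t).const_mul _).trans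
    (Finset.sum_congr rfl fun s _ => ?_)
  refine (integral_finsetSum _ fun t _ => (hX a s b t).const_mul _).trans ?_
  simp only [integral_const_mul]

variable {m n k l : Type*} {Z : Ω → Matrix k l ℝ} {Γ : Ω → Matrix m n ℝ} {U : Matrix k k ℝ}
  {V : Matrix l l ℝ}

/-- Kronecker refers to `E(vec Z vec Zᵀ) = V ⊗ U`, as for `Z ~ MN(0, U, V)`. -/
structure KroneckerMomentModel (μ : Measure Ω) (Z : Ω → Matrix k l ℝ) (Γ : Ω → Matrix m n ℝ)
    (U : Matrix k k ℝ) (V : Matrix l l ℝ) : Prop where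
  measurable_latent : Measurable Z
  measurable_noise : Measurable Γ
  integral_noise : ∀ a s, ∫ ω, Γ ω a s ∂μ = 0
  integral_latent_mul_latent : ∀ j c j' c', ∫ ω, Z ω j j' * Z ω c c' ∂μ = U j c * V j' c'
  integrable_latent_mul_latent : ∀ j c j' c', Integrable (fun ω => Z ω j c * Z ω j' c') μ
  integrable_noise_mul_noise : ∀ a s a' s', Integrable (fun ω => Γ ω a s * Γ ω a' s') μ
  integrable_latent_mul_noise : ∀ j c a s, Integrable (fun ω => Z ω j c * Γ ω a s) μ
  iIndepFun_noise : iIndepFun (fun (as : m × n) ω => Γ ω as.1 as.2) μ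
  indepFun_latent_noise : IndepFun Z Γ μ

namespace KroneckerMomentModel

lemma integrable_noise_mul_latent (hM : KroneckerMomentModel μ Z Γ U V) (a : m) (s : n) (j : k)
    (c : l) :
    Integrable (fun ω => Γ ω a s * Z ω j c) μ :=
  (hM.integrable_latent_mul_noise j c a s).congr (.of_forall fun _ => mul_comm _ _)

lemma integrable_entry_mul_entry (hM : KroneckerMomentModel μ Z Γ U V) (g : m → k) (f : n → l)
    (a : m) (s : n) (b : m) (t : n) :
    Integrable (fun ω => ((Z ω).submatrix g f + Γ ω) a s * ((Z ω).submatrix g f + Γ ω) b t) μ :=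
  (hM.integrable_latent_mul_latent _ _ _ _).add_mul_add (hM.integrable_latent_mul_noise _ _ _ _)
    (hM.integrable_noise_mul_latent _ _ _ _) (hM.integrable_noise_mul_noise _ _ _ _)

lemma integral_latent_mul_noise (hM : KroneckerMomentModel μ Z Γ U V) (j : k) (c : l) (a : m)
    (s : n) :
    ∫ ω, Z ω j c * Γ ω a s ∂μ = 0 :=
  (hM.indepFun_latent_noise.comp (measurable_matrix_apply j c)
    (measurable_matrix_apply a s)).integral_mul_eq_zero
    ((measurable_matrix_apply j c).comp hM.measurable_latent)
    ((measurable_matrix_apply a s).comp hM.measurable_noise) (hM.integral_noise a s)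

lemma integral_noise_mul_noise_of_ne (hM : KroneckerMomentModel μ Z Γ U V) {a b : m} (hab : a ≠ b)
    (s t : n) :
    ∫ ω, Γ ω a s * Γ ω b t ∂μ = 0 :=
  (hM.iIndepFun_noise.indepFun (i := (a, s)) (j := (b, t)) (by simp [hab])).integral_mul_eq_zero
    ((measurable_matrix_apply a s).comp hM.measurable_noise)
    ((measurable_matrix_apply b t).comp hM.measurable_noise) (hM.integral_noise b t)

lemma integral_entry_mul_entry_of_ne (hM : KroneckerMomentModel μ Z Γ U V) (g : m → k)
    (f : n → l) {a b : m} (hab : a ≠ b) (s t : n) :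
    ∫ ω, ((Z ω).submatrix g f + Γ ω) a s * ((Z ω).submatrix g f + Γ ω) b t ∂μ
      = U (g a) (g b) * V (f s) (f t) := by
  have hnoise_latent : ∫ ω, Γ ω a s * Z ω (g b) (f t) ∂μ = 0 := by
    simp_rw [mul_comm (Γ _ a s)]
    exact hM.integral_latent_mul_noise _ _ _ _
  simp only [Matrix.add_apply, submatrix_apply]
  rw [integral_add_mul_add_of_integral_cross_eq_zero (hM.integrable_latent_mul_latent _ _ _ _)
    (hM.integrable_latent_mul_noise _ _ _ _) (hM.integrable_noise_mul_latent _ _ _ _)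
    (hM.integrable_noise_mul_noise _ _ _ _) (hM.integral_latent_mul_noise _ _ _ _) hnoise_latent
    (hM.integral_noise_mul_noise_of_ne hab s t), hM.integral_latent_mul_latent]

end KroneckerMomentModel

end Moments

lemma KroneckerMomentModel.matExp_weightO_apply_of_ne {Ω : Type*} [MeasurableSpace Ω]
    {μ : Measure Ω} {p q K₁ K₂ : ℕ} {Z : Ω → Matrix (Fin K₁) (Fin K₂) ℝ}
    {Γ : Ω → Matrix (Fin p) (Fin q) ℝ} {U : Matrix (Fin K₁) (Fin K₁) ℝ}
    {V : Matrix (Fin K₂) (Fin K₂) ℝ} (hM : KroneckerMomentModel μ Z Γ U V) (g : Fin p → Fin K₁)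
    {f : Fin q → Fin K₂} (hf : Function.Surjective f) (a c : Fin p) (hac : a ≠ c) :
    matExp μ (fun ω => ((Z ω).submatrix g f + Γ ω)
        * weightO ((1 : Matrix (Fin K₂) (Fin K₂) ℝ).submatrix f id)
        * ((Z ω).submatrix g f + Γ ω)ᵀ) a c
      = V.trace / K₂ * U (g a) (g c) := by
  rw [matExp_mul_mul_transpose_apply (hM.integrable_entry_mul_entry g f)]
  simp only [hM.integral_entry_mul_entry_of_ne g f hac, mul_left_comm _ (U _ _),
    ← Finset.mul_sum]
  rw [sum_weightO_mul_submatrix_apply hf, mul_comm]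

lemma COD_eq_of_offDiag_eq {p : ℕ} {ι : Type*} [Finite ι] {S : Matrix (Fin p) (Fin p) ℝ}
    {g : Fin p → ι} {u : Matrix ι ι ℝ} {κ : ℝ} (hκ : 0 ≤ κ)
    (hS : ∀ a c, a ≠ c → S a c = κ * u (g a) (g c)) {w x : Fin p}
    (hrep : ∀ k, ∃ c, g c = k ∧ c ≠ w ∧ c ≠ x) :
    COD S w x = κ * ⨆ l, |u (g w) l - u (g x) l| := by
  have hdiff : ∀ c, c ≠ w ∧ c ≠ x →
      |S w c - S x c| = κ * |u (g w) (g c) - u (g x) (g c)| := by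
    rintro c ⟨hcw, hcx⟩
    rw [hS w c hcw.symm, hS x c hcx.symm, ← mul_sub, abs_mul, abs_of_nonneg hκ]
  rw [COD, Real.mul_iSup_of_nonneg hκ]
  apply le_antisymm
  · refine Real.iSup_le (fun c => Real.iSup_le (fun hc => ?_) ?_) ?_
    · rw [hdiff c hc]
      exact le_ciSup (f := fun l => κ * |u (g w) l - u (g x) l|)
        (Finite.bddAbove_range _) (g c)
    all_goals exact Real.iSup_nonneg fun l => mul_nonneg hκ (abs_nonneg _)
  · refine Real.iSup_le (fun l => ?_) ?_
    · obtain ⟨c, rfl, hc⟩ := hrep l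
      rw [← hdiff c hc, ← ciSup_pos (f := fun _ => |S w c - S x c|) hc]
      exact le_ciSup (f := fun c => ⨆ _ : c ≠ w ∧ c ≠ x, |S w c - S x c|)
        (Finite.bddAbove_range _) c
    · exact Real.iSup_nonneg fun c => Real.iSup_nonneg fun _ => abs_nonneg _

lemma MCOD_eq_iInf_of_COD_eq {p : ℕ} {ι : Type*} {r : Fin p → Fin p → Prop}
    {S : Matrix (Fin p) (Fin p) ℝ} {g : Fin p → ι} (hg : Function.Surjective g)
    (hr : ∀ a b, r a b ↔ g a = g b) {F : ι → ι → ℝ}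
    (hF : ∀ a b, g a ≠ g b → COD S a b = F (g a) (g b)) :
    MCOD r S = ⨅ ih : {ih : ι × ι // ih.1 ≠ ih.2}, F ih.1.1 ih.1.2 := by
  let φ : {ab : Fin p × Fin p // ¬ r ab.1 ab.2} → {ih : ι × ι // ih.1 ≠ ih.2} :=
    fun ab => ⟨(g ab.1.1, g ab.1.2), by simpa [hr] using ab.2⟩
  have hφ : Function.Surjective φ := by
    rintro ⟨⟨i, h⟩, hih⟩
    obtain ⟨a, rfl⟩ := hg i
    obtain ⟨b, rfl⟩ := hg h
    exact ⟨⟨(a, b), by simpa [hr] using hih⟩, rfl⟩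
  rw [MCOD, ← hφ.iInf_comp]
  exact iInf_congr fun ab => hF _ _ (φ ab).2

theorem matrix_normal_cod_formula_general
    {Ω : Type} [MeasurableSpace Ω] (μ : Measure Ω)
    {p q K₁ K₂ : ℕ}
    (A : Matrix (Fin p) (Fin K₁) ℝ) (B : Matrix (Fin q) (Fin K₂) ℝ)
    (Z : Ω → Matrix (Fin K₁) (Fin K₂) ℝ) (Γ X : Ω → Matrix (Fin p) (Fin q) ℝ)
    (U : Matrix (Fin K₁) (Fin K₁) ℝ) (V : Matrix (Fin K₂) (Fin K₂) ℝ)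
    (hA : IsMembership A) (hB : IsMembership B)
    (hmodel : ∀ ω, X ω = A * Z ω * Bᵀ + Γ ω)
    (hZmeas : Measurable Z) (hΓmeas : Measurable Γ)
    (hΓmean : ∀ a b, ∫ ω, Γ ω a b ∂μ = 0)
    (hZcov : ∀ (j c : Fin K₁) (l m : Fin K₂),
        ∫ ω, Z ω j l * Z ω c m ∂μ = U j c * V l m)
    (hΓint : ∀ a b a' b', Integrable (fun ω => Γ ω a b * Γ ω a' b') μ)
    (hZint : ∀ j k j' k', Integrable (fun ω => Z ω j k * Z ω j' k') μ)
    (hZΓint : ∀ j k a b, Integrable (fun ω => Z ω j k * Γ ω a b) μ)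
    (hΓindep : iIndepFun
      (fun (ij : Fin p × Fin q) ω => Γ ω ij.1 ij.2) μ)
    (hindep : IndepFun Z Γ μ)
    (hV : V.PosSemidef) :
    (∀ (w x : Fin p) (i h : Fin K₁), w ≠ x → A w i = 1 → A x h = 1 →
      (∀ k : Fin K₁, ∃ c : Fin p, A c k = 1 ∧ c ≠ w ∧ c ≠ x) →
      COD (matExp μ fun ω =>
          X ω * ((1/(K₂:ℝ)) • (B * ((Bᵀ * B)^2)⁻¹ * Bᵀ)) * (X ω)ᵀ) w x
        = (V.trace / K₂) * ⨆ l : Fin K₁, |U i l - U h l|) ∧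
    ((∀ k : Fin K₁, ∃ c d : Fin p, c ≠ d ∧ A c k = 1 ∧ A d k = 1) → 2 ≤ K₁ →
      MCOD (SameCluster A)
          (matExp μ fun ω =>
            X ω * ((1/(K₂:ℝ)) • (B * ((Bᵀ * B)^2)⁻¹ * Bᵀ)) * (X ω)ᵀ)
        = (V.trace / K₂) *
            ⨅ ih : {ih : Fin K₁ × Fin K₁ // ih.1 ≠ ih.2},
              ⨆ l : Fin K₁, |U ih.1.1 l - U ih.1.2 l|) := by
  obtain ⟨g, hg, rfl⟩ := hA.exists_eq_one_submatrix
  obtain ⟨f, hf, rfl⟩ := hB.exists_eq_one_submatrix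
  obtain rfl : X = fun ω => (Z ω).submatrix g f + Γ ω :=
    funext fun ω => by rw [hmodel, one_submatrix_mul_mul_transpose]
  have hM : KroneckerMomentModel μ Z Γ U V :=
    ⟨hZmeas, hΓmeas, hΓmean, hZcov, hZint, hΓint, hZΓint, hΓindep, hindep⟩
  have hκ : 0 ≤ V.trace / K₂ := div_nonneg hV.trace_nonneg (Nat.cast_nonneg _)
  have hCOD := fun w x =>
    COD_eq_of_offDiag_eq hκ (hM.matExp_weightO_apply_of_ne g hf) (w := w) (x := x)
  simp only [one_submatrix_apply_eq_one_iff]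
  refine ⟨fun w x i h _ hwi hxh hrep => ?_, fun htwo _ => ?_⟩
  · rw [← hwi, ← hxh]
    exact hCOD w x hrep
  · rw [Real.mul_iInf_of_nonneg hκ]
    refine MCOD_eq_iInf_of_COD_eq hg (sameCluster_one_submatrix_iff g)
      (F := fun i h => V.trace / K₂ * ⨆ l, |U i l - U h l|) fun w x hwx => hCOD w x ?_
    intro k
    obtain ⟨c, d, hcd, hc, hd⟩ := htwo k
    -- `w` and `x` lie in different clusters, so they cannot be both members `c ≠ d` of cluster `k`
    grind

/-- Under model (1.1) with matrix-normal-type second moments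
`E(Z_{jl} Z_{cm}) = U_{jc} V_{lm}` and `W_O = B(BᵀB)^{-2}Bᵀ/K₂`:
(i) for `w ≠ x` in row clusters `i, h`, if every row cluster contains an index
different from `w` and `x`, then
`COD_{Σ_{p,W_O}}(w,x) = (tr V / K₂) · max_l |U_{il} − U_{hl}|`;
(ii) if every row cluster has at least two indices and `K₁ ≥ 2`, then
`MCOD(Σ_{p,W_O}) = (tr V / K₂) · min_{i≠h} max_l |U_{il} − U_{hl}|`. -/
theorem matrix_normal_cod_formula
    {Ω : Type} [MeasurableSpace Ω] (μ : Measure Ω) [IsProbabilityMeasure μ]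
    {p q K₁ K₂ : ℕ} (hp : 3 ≤ p)
    (A : Matrix (Fin p) (Fin K₁) ℝ) (B : Matrix (Fin q) (Fin K₂) ℝ)
    (Z : Ω → Matrix (Fin K₁) (Fin K₂) ℝ) (Γ X : Ω → Matrix (Fin p) (Fin q) ℝ)
    (U : Matrix (Fin K₁) (Fin K₁) ℝ) (V : Matrix (Fin K₂) (Fin K₂) ℝ)
    (hA : IsMembership A) (hB : IsMembership B)
    (hmodel : ∀ ω, X ω = A * Z ω * Bᵀ + Γ ω)
    (hZmeas : Measurable Z) (hΓmeas : Measurable Γ)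
    (hZmean : ∀ j k, ∫ ω, Z ω j k ∂μ = 0)
    (hΓmean : ∀ a b, ∫ ω, Γ ω a b ∂μ = 0)
    (hZcov : ∀ (j c : Fin K₁) (l m : Fin K₂),
        ∫ ω, Z ω j l * Z ω c m ∂μ = U j c * V l m)
    (hΓint : ∀ a b a' b', Integrable (fun ω => Γ ω a b * Γ ω a' b') μ)
    (hZint : ∀ j k j' k', Integrable (fun ω => Z ω j k * Z ω j' k') μ)
    (hZΓint : ∀ j k a b, Integrable (fun ω => Z ω j k * Γ ω a b) μ)
    (hΓindep : iIndepFun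
      (fun (ij : Fin p × Fin q) ω => Γ ω ij.1 ij.2) μ)
    (hindep : IndepFun Z Γ μ)
    (hV : V.PosSemidef) :
    (∀ (w x : Fin p) (i h : Fin K₁), w ≠ x → A w i = 1 → A x h = 1 →
      (∀ k : Fin K₁, ∃ c : Fin p, A c k = 1 ∧ c ≠ w ∧ c ≠ x) →
      COD (matExp μ fun ω =>
          X ω * ((1/(K₂:ℝ)) • (B * ((Bᵀ * B)^2)⁻¹ * Bᵀ)) * (X ω)ᵀ) w x
        = (V.trace / K₂) * ⨆ l : Fin K₁, |U i l - U h l|) ∧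
    ((∀ k : Fin K₁, ∃ c d : Fin p, c ≠ d ∧ A c k = 1 ∧ A d k = 1) → 2 ≤ K₁ →
      MCOD (SameCluster A)
          (matExp μ fun ω =>
            X ω * ((1/(K₂:ℝ)) • (B * ((Bᵀ * B)^2)⁻¹ * Bᵀ)) * (X ω)ᵀ)
        = (V.trace / K₂) *
            ⨅ ih : {ih : Fin K₁ × Fin K₁ // ih.1 ≠ ih.2},
              ⨆ l : Fin K₁, |U ih.1.1 l - U ih.1.2 l|) :=
  matrix_normal_cod_formula_general μ A B Z Γ X U V hA hB hmodel hZmeas hΓmeas hΓmean hZcov hΓint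
    hZint hZΓint hΓindep hindep hV
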